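/- arXiv:2503.17256 — 2 statements merged into one kernel-verified Lean document; each statement's English description precedes it below -/
import Mathlib

section
/- For n ≥ 1, the number of classical parking functions with n cars and n spots equals (n+1)^(n-1). -/
/-- Try to park a car with preference `a` under the `(k,l)`-pullback rule on a
street with spots `1,…,n`, where `occ` is the set of occupied spots.  The car
parks at `a` if it is free; otherwise it checks `a-1,…,a-k` (not before spot 1)
and parks in the first free spot found; failing that it checks `a+1,…,a+l`
(not beyond spot `n`).  Returns the spot where the car parks, if any. -/
def pullTry (k l n : ℕ) (occ : Finset ℕ) (a : ℕ) : Option ℕ :=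
  if a ∉ occ then some a
  else
    match ((List.range k).map (fun j => a - (j + 1))).find?
        (fun s => decide (1 ≤ s ∧ s ∉ occ)) with
    | some s => some s
    | none =>
        ((List.range l).map (fun j => a + (j + 1))).find?
          (fun s => decide (s ≤ n ∧ s ∉ occ))

/-- Park a list of cars sequentially by the `(k,l)`-pullback rule, returning the
list of spots where they park (in order) if all of them park. -/
def pullRunAux (k l n : ℕ) : List ℕ → Finset ℕ → Option (List ℕ)
  | [], _ => some []
  | a :: rest, occ =>
    match pullTry k l n occ a with
    | none => none
    | some s => (pullRunAux k l n rest (insert s occ)).map (fun t => s :: t)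

def pullRun (k l n : ℕ) (prefs : List ℕ) : Option (List ℕ) :=
  pullRunAux k l n prefs ∅

/-- The `k`-Naples rule: back up at most `k` spots, then drive forward all the
way to spot `n`. -/
def naplesTry (k n : ℕ) (occ : Finset ℕ) (a : ℕ) : Option ℕ :=
  if a ∉ occ then some a
  else
    match ((List.range k).map (fun j => a - (j + 1))).find?
        (fun s => decide (1 ≤ s ∧ s ∉ occ)) with
    | some s => some s
    | none => (List.range' (a + 1) (n - a)).find? (fun s => decide (s ∉ occ))

def naplesRunAux (k n : ℕ) : List ℕ → Finset ℕ → Option (List ℕ)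
  | [], _ => some []
  | a :: rest, occ =>
    match naplesTry k n occ a with
    | none => none
    | some s => (naplesRunAux k n rest (insert s occ)).map (fun t => s :: t)

def naplesRun (k n : ℕ) (prefs : List ℕ) : Option (List ℕ) :=
  naplesRunAux k n prefs ∅

/-- The classical rule: park in the first free spot among `a, a+1, …, n`. -/
def classicalTry (n : ℕ) (occ : Finset ℕ) (a : ℕ) : Option ℕ :=
  (List.range' a (n + 1 - a)).find? (fun s => decide (s ∉ occ))

def classicalRunAux (n : ℕ) : List ℕ → Finset ℕ → Option (List ℕ)
  | [], _ => some []
  | a :: rest, occ =>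
    match classicalTry n occ a with
    | none => none
    | some s => (classicalRunAux n rest (insert s occ)).map (fun t => s :: t)

def classicalRun (n : ℕ) (prefs : List ℕ) : Option (List ℕ) :=
  classicalRunAux n prefs ∅

/-- The list of (1-based) preferences encoded by a tuple `α ∈ [n]^m`. -/
def prefList {m n : ℕ} (α : Fin m → Fin n) : List ℕ :=
  List.ofFn (fun i => (α i : ℕ) + 1)

/-- The finset of `(k,l)`-pullback `(m,n)`-parking functions. -/
def pullPFs (k l m n : ℕ) : Finset (Fin m → Fin n) :=
  Finset.univ.filter (fun α => (pullRun k l n (prefList α)).isSome = true)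

/-- The finset of `k`-Naples `(m,n)`-parking functions. -/
def naplesPFs (k m n : ℕ) : Finset (Fin m → Fin n) :=
  Finset.univ.filter (fun α => (naplesRun k n (prefList α)).isSome = true)

/-- The finset of classical `(m,n)`-parking functions. -/
def classicalPFs (m n : ℕ) : Finset (Fin m → Fin n) :=
  Finset.univ.filter (fun α => (classicalRun n (prefList α)).isSome = true)

/-!
Pollak's circle argument. Add a spot `0` to the street `1, …, n`, making it the circle
`ZMod (n + 1)`, and let each car drive round the circle from its preference to the first free
spot. Every tuple of `n` preferences in `ZMod (n + 1)` then leaves exactly one spot empty, and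
adding a constant to all preferences rotates the empty spot, so each of the `n + 1` spots is
left empty by `(n + 1) ^ (n - 1)` tuples. A tuple with entries in `1, …, n` is a parking
function exactly when it leaves `0` empty: a car fails on the street precisely when it drives
past `n` and takes `0` on the circle.
-/

open Finset

namespace CircularParking

variable {m : ℕ}

def tryPark (occ : Finset (ZMod m)) (a : ZMod m) : Option (ZMod m) :=
  ((List.range m).map fun j : ℕ => a + j).find? fun s => decide (s ∉ occ)

def park (occ : Finset (ZMod m)) (a : ZMod m) : Finset (ZMod m) :=
  match tryPark occ a with
  | some s => insert s occ
  | none => occ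

def occupied (L : List (ZMod m)) (occ : Finset (ZMod m)) : Finset (ZMod m) :=
  L.foldl park occ

lemma occupied_cons (a : ZMod m) (L : List (ZMod m)) (occ : Finset (ZMod m)) :
    occupied (a :: L) occ = occupied L (park occ a) := rfl

lemma notMem_of_tryPark_eq_some {occ : Finset (ZMod m)} {a s : ZMod m}
    (h : tryPark occ a = some s) : s ∉ occ := by
  simpa using List.find?_some h

lemma exists_tryPark_eq_some [NeZero m] {occ : Finset (ZMod m)} (h : #occ < m) (a : ZMod m) :
    ∃ s, tryPark occ a = some s := by
  obtain ⟨t, -, ht⟩ := exists_mem_notMem_of_card_lt_card (s := occ) (t := univ)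
    (by simpa [ZMod.card] using h)
  refine Option.isSome_iff_exists.mp (List.find?_isSome.mpr ⟨t, ?_, by simpa using ht⟩)
  exact List.mem_map.mpr ⟨(t - a).val, List.mem_range.mpr (ZMod.val_lt _), by simp⟩

lemma tryPark_self [NeZero m] {occ : Finset (ZMod m)} {a : ZMod m} (h : a ∉ occ) :
    tryPark occ a = some a := by
  obtain ⟨k, rfl⟩ := Nat.exists_eq_succ_of_ne_zero (NeZero.ne m)
  simp [tryPark, List.range_succ_eq_map, h]

lemma subset_park (occ : Finset (ZMod m)) (a : ZMod m) : occ ⊆ park occ a := by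
  unfold park
  split
  · exact subset_insert _ _
  · exact Subset.rfl

lemma subset_occupied (L : List (ZMod m)) (occ : Finset (ZMod m)) : occ ⊆ occupied L occ := by
  induction L generalizing occ with
  | nil => exact Subset.rfl
  | cons a L ih => exact (subset_park occ a).trans (ih _)

lemma mem_park_self [NeZero m] (occ : Finset (ZMod m)) (a : ZMod m) : a ∈ park occ a := by
  by_cases ha : a ∈ occ
  · exact subset_park occ a ha
  · simp [park, tryPark_self ha]

lemma mem_occupied_of_mem [NeZero m] {L : List (ZMod m)} {a : ZMod m} (ha : a ∈ L)
    (occ : Finset (ZMod m)) : a ∈ occupied L occ := by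
  induction L generalizing occ with
  | nil => simp at ha
  | cons b L ih =>
    rcases List.mem_cons.mp ha with rfl | ha
    · exact subset_occupied L _ (mem_park_self occ a)
    · exact ih ha _

lemma card_park [NeZero m] {occ : Finset (ZMod m)} (h : #occ < m) (a : ZMod m) :
    #(park occ a) = #occ + 1 := by
  obtain ⟨s, hs⟩ := exists_tryPark_eq_some h a
  simp only [park, hs]
  exact card_insert_of_notMem (notMem_of_tryPark_eq_some hs)

lemma card_occupied [NeZero m] (L : List (ZMod m)) {occ : Finset (ZMod m)}
    (h : #occ + L.length ≤ m) : #(occupied L occ) = #occ + L.length := by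
  induction L generalizing occ with
  | nil => rfl
  | cons a L ih =>
    simp only [List.length_cons] at h ⊢
    rw [occupied_cons, ih (by rw [card_park (by omega)]; omega), card_park (by omega)]
    ring

lemma tryPark_add (occ : Finset (ZMod m)) (a c : ZMod m) :
    tryPark (occ.image (· + c)) (a + c) = (tryPark occ a).map (· + c) := by
  have hprobes : ((List.range m).map fun j : ℕ => a + c + j) =
      ((List.range m).map fun j : ℕ => a + j).map (· + c) := by
    simp only [List.map_map]
    congr 1
    funext j
    simp [add_right_comm]
  simp only [tryPark, hprobes, List.find?_map]
  congr 2
  exact List.find?_congr fun x _ => by simp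

lemma park_add (occ : Finset (ZMod m)) (a c : ZMod m) :
    park (occ.image (· + c)) (a + c) = (park occ a).image (· + c) := by
  unfold park
  rw [tryPark_add]
  cases tryPark occ a <;> simp [image_insert]

lemma occupied_map_add (L : List (ZMod m)) (occ : Finset (ZMod m)) (c : ZMod m) :
    occupied (L.map (· + c)) (occ.image (· + c)) = (occupied L occ).image (· + c) := by
  induction L generalizing occ with
  | nil => rfl
  | cons a L ih => rw [List.map_cons, occupied_cons, occupied_cons, park_add, ih]

def leavingEmpty (n : ℕ) (x : ZMod (n + 1)) : Finset (Fin n → ZMod (n + 1)) :=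
  {β | x ∉ occupied (List.ofFn β) ∅}

lemma card_occupied_ofFn {n : ℕ} (β : Fin n → ZMod (n + 1)) :
    #(occupied (List.ofFn β) ∅) = n := by
  simpa using card_occupied (List.ofFn β) (occ := ∅) (by simp)

lemma mem_occupied_ofFn_add_iff {n : ℕ} (β : Fin n → ZMod (n + 1)) (x c : ZMod (n + 1)) :
    x + c ∈ occupied (List.ofFn fun i => β i + c) ∅ ↔ x ∈ occupied (List.ofFn β) ∅ := by
  have hshift := occupied_map_add (List.ofFn β) ∅ c
  rw [List.map_ofFn, image_empty] at hshift
  exact hshift ▸ (add_left_injective c).mem_finset_image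

lemma card_leavingEmpty_eq (n : ℕ) (x y : ZMod (n + 1)) :
    #(leavingEmpty n x) = #(leavingEmpty n y) := by
  obtain ⟨c, rfl⟩ : ∃ c, y = x + c := ⟨y - x, by abel⟩
  refine card_nbij' (fun β i => β i + c) (fun β i => β i + -c) ?_ ?_
    (fun β _ => by simp) (fun β _ => by simp)
  · intro β hβ
    simpa [leavingEmpty, mem_occupied_ofFn_add_iff] using hβ
  · intro β hβ
    simpa [leavingEmpty, ← mem_occupied_ofFn_add_iff _ (x + c) (-c)] using hβ

lemma sum_card_leavingEmpty (n : ℕ) :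
    ∑ x : ZMod (n + 1), #(leavingEmpty n x) = (n + 1) ^ n := by
  have hvacant (β : Fin n → ZMod (n + 1)) : #{x | x ∉ occupied (List.ofFn β) ∅} = 1 := by
    rw [filter_not, filter_mem_eq_inter, univ_inter, ← compl_eq_univ_sdiff, card_compl,
      card_occupied_ofFn, ZMod.card]
    omega
  simp only [leavingEmpty, card_filter]
  rw [sum_comm]
  simp only [← card_filter, hvacant, sum_const, card_univ, Fintype.card_fun, ZMod.card,
    Fintype.card_fin, smul_eq_mul, mul_one]

lemma card_leavingEmpty (n : ℕ) (x : ZMod (n + 1)) :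
    #(leavingEmpty n x) = (n + 1) ^ (n - 1) := by
  have h := sum_card_leavingEmpty n
  simp only [card_leavingEmpty_eq n _ x, sum_const, card_univ, ZMod.card, smul_eq_mul] at h
  refine Nat.eq_of_mul_eq_mul_left n.succ_pos (h.trans ?_)
  cases n <;> simp [pow_succ']

end CircularParking

lemma natCast_injOn_Iic (n : ℕ) : Set.InjOn (Nat.cast : ℕ → ZMod (n + 1)) (Set.Iic n) := by
  intro x hx y hy h
  rwa [ZMod.natCast_eq_natCast_iff', Nat.mod_eq_of_lt (Nat.lt_succ_of_le hx),
    Nat.mod_eq_of_lt (Nat.lt_succ_of_le hy)] at h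

section

open CircularParking

variable {n : ℕ}

lemma natCast_mem_image_natCast_iff {occ : Finset ℕ} (hocc : occ ⊆ Icc 1 n) {s : ℕ}
    (hs : s ≤ n) : (s : ZMod (n + 1)) ∈ occ.image Nat.cast ↔ s ∈ occ := by
  rw [← mem_coe, coe_image]
  exact (natCast_injOn_Iic n).mem_image_iff (fun x hx => (mem_Icc.mp (hocc hx)).2) hs

lemma zero_notMem_image_natCast {occ : Finset ℕ} (hocc : occ ⊆ Icc 1 n) :
    (0 : ZMod (n + 1)) ∉ occ.image Nat.cast := by
  rw [← Nat.cast_zero, natCast_mem_image_natCast_iff hocc n.zero_le]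
  exact fun h => by simpa using hocc h

/-- Driving round `ZMod (n + 1)` from `a` means driving along the street `a, …, n`, then
through the extra spot `n + 1 = 0` and on to `1, …, a - 1`. -/
lemma map_natCast_add_range {a : ℕ} (ha : a ≤ n + 1) :
    ((List.range (n + 1)).map fun j : ℕ => (a : ZMod (n + 1)) + j) =
      (List.range' a (n + 1 - a) ++ List.range' (n + 1) a).map Nat.cast := by
  have hsplit := List.range'_append (s := a) (m := n + 1 - a) (n := a) (step := 1)
  rw [one_mul, Nat.add_sub_cancel' ha, Nat.sub_add_cancel ha] at hsplit
  rw [hsplit, List.range'_eq_map_range, List.map_map]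
  congr 1
  funext j
  simp

lemma tryPark_natCast {occ : Finset ℕ} (hocc : occ ⊆ Icc 1 n) {a : ℕ} (ha : a ∈ Icc 1 n) :
    tryPark (occ.image Nat.cast) (a : ZMod (n + 1)) =
      some (((classicalTry n occ a).map Nat.cast).getD 0) := by
  obtain ⟨ha1, han⟩ := mem_Icc.mp ha
  have hstreet : (List.range' a (n + 1 - a)).find?
      ((fun s => decide (s ∉ occ.image Nat.cast)) ∘ (Nat.cast : ℕ → ZMod (n + 1))) =
      classicalTry n occ a := by
    refine List.find?_congr fun x hx => ?_
    have hxn : x ≤ n := by have := (List.mem_range'_1.mp hx).2; omega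
    simp only [Function.comp_apply, natCast_mem_image_natCast_iff hocc hxn]
  have hwrap : List.range' (n + 1) a = (n + 1) :: List.range' (n + 2) (a - 1) := by
    conv_lhs => rw [← Nat.sub_add_cancel ha1, List.range'_succ]
  rw [tryPark, map_natCast_add_range (by omega), List.find?_map, List.find?_append, hstreet]
  cases classicalTry n occ a with
  | some s => rfl
  | none =>
    simp [hwrap, zero_notMem_image_natCast hocc, -mem_image]

lemma isSome_classicalRunAux_iff {L : List ℕ} (hL : ∀ a ∈ L, a ∈ Icc 1 n) {occ : Finset ℕ}
    (hocc : occ ⊆ Icc 1 n) :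
    (classicalRunAux n L occ).isSome ↔
      (0 : ZMod (n + 1)) ∉ occupied (L.map Nat.cast) (occ.image Nat.cast) := by
  induction L generalizing occ with
  | nil => simpa [classicalRunAux, occupied] using zero_notMem_image_natCast hocc
  | cons a L ih =>
    have hpark := tryPark_natCast hocc (hL a List.mem_cons_self)
    simp only [List.map_cons, occupied_cons, park, hpark]
    cases hclassical : classicalTry n occ a with
    | none =>
      simpa [classicalRunAux, hclassical] using subset_occupied _ _ (mem_insert_self _ _)
    | some s =>
      have hs : s ∈ Icc 1 n := by
        have := List.mem_range'_1.mp (List.mem_of_find?_eq_some hclassical)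
        grind
      simpa [classicalRunAux, hclassical, image_insert] using
        ih (fun b hb => hL b (List.mem_cons_of_mem _ hb)) (insert_subset hs hocc)

def toCircle (α : Fin n → Fin n) : Fin n → ZMod (n + 1) :=
  fun i => ((α i + 1 : ℕ) : ZMod (n + 1))

lemma mem_classicalPFs_iff (α : Fin n → Fin n) :
    α ∈ classicalPFs n n ↔ toCircle α ∈ leavingEmpty n 0 := by
  have hprefs : ∀ a ∈ prefList α, a ∈ Icc 1 n := by
    intro a ha
    obtain ⟨i, rfl⟩ := List.mem_ofFn.mp ha
    simp
  have hcast : (prefList α).map Nat.cast = List.ofFn (toCircle α) := by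
    rw [prefList, List.map_ofFn]
    rfl
  simp only [classicalPFs, leavingEmpty, mem_filter, mem_univ, true_and]
  rw [classicalRun, isSome_classicalRunAux_iff hprefs (empty_subset _), image_empty, hcast]

lemma toCircle_injective : Function.Injective (toCircle (n := n)) := by
  intro α β h
  funext i
  have := natCast_injOn_Iic n (by simp) (by simp) (congrFun h i)
  exact Fin.ext (by omega)

lemma ne_zero_of_mem_leavingEmpty {γ : Fin n → ZMod (n + 1)} (hγ : γ ∈ leavingEmpty n 0)
    (i : Fin n) : γ i ≠ 0 := by
  rintro hi
  exact (mem_filter.mp hγ).2 (mem_occupied_of_mem (List.mem_ofFn.mpr ⟨i, hi⟩) ∅)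

lemma card_classicalPFs_eq_card_leavingEmpty :
    #(classicalPFs n n) = #(leavingEmpty n 0) := by
  refine card_nbij toCircle (fun α hα => (mem_classicalPFs_iff α).mp hα)
    toCircle_injective.injOn fun γ hγ => ?_
  rw [mem_coe] at hγ
  have hpos (i : Fin n) : 1 ≤ (γ i).val :=
    Nat.one_le_iff_ne_zero.mpr ((ZMod.val_ne_zero _).mpr (ne_zero_of_mem_leavingEmpty hγ i))
  have hval (i : Fin n) : (γ i).val - 1 < n := by
    have := ZMod.val_lt (γ i)
    have := hpos i
    omega
  have hγα : toCircle (fun i => ⟨(γ i).val - 1, hval i⟩) = γ := by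
    funext i
    simp [toCircle, Nat.sub_add_cancel (hpos i)]
  exact ⟨_, (mem_classicalPFs_iff _).mpr (by rwa [hγα]), hγα⟩

end

theorem stmt1_general (n : ℕ) :
    (classicalPFs n n).card = (n + 1) ^ (n - 1) := by
  rw [card_classicalPFs_eq_card_leavingEmpty, CircularParking.card_leavingEmpty]

theorem stmt1 (n : ℕ) (h : 1 ≤ n) :
    (classicalPFs n n).card = (n + 1) ^ (n - 1) :=
  stmt1_general n
end

section
/- For π ∈ S_{m,n} and i ∈ [n] with π_i > 0, the number of preferences a ∈ [n] such that, given the cars π_j with π_j < π_i already parked in their spots, car π_i parks in spot i under the (k,ℓ)-pullback rule, equals B(π_i) + F(π_i) + 1, where B(π_i) = min(Right(π_i), k) and F(π_i) is as defined by the cases: 0 if Left(π_i)=0, min(i-1,ℓ) if Left(π_i)=i-1>0, max(min(Left(π_i)-k, ℓ), 0) if 0 < Left(π_i) < i-1. -/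
/-- `outcomeOf spots i = j+1` if car `j+1` (0-indexed `j`) parked in spot `i`,
and `0` if spot `i` is vacant.  Here `spots` lists the spots of cars `1,…,m`. -/
def outcomeOf (spots : List ℕ) (i : ℕ) : ℕ :=
  match spots.findIdx? (· == i) with
  | some j => j + 1
  | none => 0

/-- The outcome of a `(k,l)`-pullback parking function, as a function sending
the (0-based) spot index `i` to the label of the car parked in spot `i+1`
(or `0` if vacant). -/
def pullOutcome (k l n : ℕ) {m : ℕ} (α : Fin m → Fin n) : Fin n → ℕ :=
  fun i => outcomeOf ((pullRun k l n (prefList α)).getD []) ((i : ℕ) + 1)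

/-- The outcome of a classical parking function. -/
def classicalOutcome (n : ℕ) {m : ℕ} (α : Fin m → Fin n) : Fin n → ℕ :=
  fun i => outcomeOf ((classicalRun n (prefList α)).getD []) ((i : ℕ) + 1)

/-- `S_{m,n}`: arrangements of the multiset `{0,…,0} ∪ [m]` with `n - m`
zeros, as functions on the `n` positions. -/
def SmnSet (m n : ℕ) : Finset (Fin n → ℕ) :=
  ((Finset.univ : Finset (Fin n → Fin (m + 1))).image
      (fun π i => (π i : ℕ))).filter
    (fun π => Finset.univ.val.map π =
      Multiset.replicate (n - m) 0 + (Multiset.range m).map (· + 1))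

/-- Read an arrangement `π` at the 1-based position `t` (zero outside `[1,n]`). -/
def at1 {n : ℕ} (π : Fin n → ℕ) (t : ℕ) : ℕ :=
  if h : 1 ≤ t ∧ t ≤ n then π ⟨t - 1, by omega⟩ else 0

/-- The spots occupied by the cars with labels `< c` (those that parked before
car `c`), as read off from the outcome `π`. -/
def occBefore {n : ℕ} (π : Fin n → ℕ) (c : ℕ) : Finset ℕ :=
  (Finset.Icc 1 n).filter (fun s => 0 < at1 π s ∧ at1 π s < c)

/-- `Right(π_i)`: the length of the longest consecutive run
`π_{i+1}, …, π_{i+x}` with `0 < π_t < π_i` throughout. -/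
def rightRun {n : ℕ} (π : Fin n → ℕ) (i : ℕ) : ℕ :=
  Nat.findGreatest
    (fun x => ∀ t ∈ Finset.Icc (i + 1) (i + x), 0 < at1 π t ∧ at1 π t < at1 π i) n

/-- `Left(π_i)`: the length of the longest consecutive run
`π_{i-x}, …, π_{i-1}` with `0 < π_t < π_i` throughout. -/
noncomputable def leftRun {n : ℕ} (π : Fin n → ℕ) (i : ℕ) : ℕ :=
  @Nat.findGreatest
    (fun x => ∀ t ∈ Finset.Icc (i - x) (i - 1), 0 < at1 π t ∧ at1 π t < at1 π i)
    (fun _ => Classical.propDecidable _) n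

/-- `B(π_i) = min(Right(π_i), k)`. -/
def Bval (k : ℕ) {n : ℕ} (π : Fin n → ℕ) (i : ℕ) : ℕ :=
  min (rightRun π i) k

/-- `F(π_i)`, defined by cases: `0` if `Left(π_i) = 0`; `min(i-1, l)` if
`Left(π_i) = i-1 > 0`; and `max(min(Left(π_i) - k, l), 0)` (truncated
subtraction) if `0 < Left(π_i) < i-1`. -/
noncomputable def Fval (k l : ℕ) {n : ℕ} (π : Fin n → ℕ) (i : ℕ) : ℕ :=
  if leftRun π i = 0 then 0
  else if leftRun π i = i - 1 then min (i - 1) l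
  else min (leftRun π i - k) l

/-- `L(σ_i)`: the length of the longest consecutive run of `σ` ending at
position `i` all of whose entries are at most `σ_i`. -/
noncomputable def Lrun {n : ℕ} (σ : Fin n → ℕ) (i : ℕ) : ℕ :=
  @Nat.findGreatest
    (fun x => ∀ t ∈ Finset.Icc (i - x + 1) i, at1 σ t ≤ at1 σ i)
    (fun _ => Classical.propDecidable _) n


/-! The cars parked before car `π_i` occupy exactly the spots `s` with `0 < π_s < π_i`. So spot `i`
is free, and it is flanked by the occupied blocks `i+1, …, i+Right(π_i)` and
`i-Left(π_i), …, i-1`, each bounded by a free spot or the end of the street. A car preferring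
`a > i` parks in `i` iff its backward search runs through occupied spots down to `i`, i.e.
`a ≤ i + min(Right(π_i), k)`. A car preferring `a < i` parks in `i` iff `a` lies in the left
block, its backward search fails (so the block reaches spot `1`, or `a` is more than `k` past the
free spot before the block), and its forward search reaches `i` within `ℓ` steps. Hence the
successful preferences form the interval `[i - F(π_i), i + B(π_i)]`. -/

theorem List.find?_map_range_eq_some {α : Type*} {g : ℕ → α} {p : α → Bool} {k : ℕ} {b : α} :
    ((List.range k).map g).find? p = some b ↔
      ∃ j < k, g j = b ∧ p b ∧ ∀ j' < j, p (g j') = false := by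
  simp only [List.find?_eq_some_iff_getElem, List.length_map, List.length_range,
    List.getElem_map, List.getElem_range, Bool.not_eq_true']
  constructor
  · rintro ⟨hb, j, hj, rfl, hlt⟩
    exact ⟨j, hj, rfl, hb, fun j' hj' => hlt j' hj'⟩
  · rintro ⟨j, hj, rfl, hb, hlt⟩
    exact ⟨hb, j, hj, rfl, fun j' hj' => hlt j' hj'⟩

section PullbackSearch

variable {occ : Finset ℕ} {k l n a b : ℕ}

theorem find?_backward_eq_some :
    ((List.range k).map (fun j => a - (j + 1))).find?
        (fun s => decide (1 ≤ s ∧ s ∉ occ)) = some b ↔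
      1 ≤ b ∧ b < a ∧ a ≤ b + k ∧ b ∉ occ ∧ ∀ s, b < s → s < a → s ∈ occ := by
  simp only [List.find?_map_range_eq_some, decide_eq_true_eq, decide_eq_false_iff_not,
    not_and, not_not]
  constructor
  · rintro ⟨j, hj, rfl, ⟨hb1, hb⟩, hbefore⟩
    refine ⟨hb1, by omega, by omega, hb, fun s hs ha => ?_⟩
    simpa [show a - (a - s - 1 + 1) = s by omega] using
      hbefore (a - s - 1) (by omega) (by omega)
  · rintro ⟨hb1, hba, hak, hb, hocc⟩
    exact ⟨a - b - 1, by omega, by omega, ⟨hb1, hb⟩,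
      fun j' hj' _ => hocc _ (by omega) (by omega)⟩

theorem find?_backward_eq_none :
    ((List.range k).map (fun j => a - (j + 1))).find?
        (fun s => decide (1 ≤ s ∧ s ∉ occ)) = none ↔
      ∀ s, 1 ≤ s → s < a → a ≤ s + k → s ∈ occ := by
  simp only [List.find?_eq_none, List.forall_mem_map, List.mem_range, decide_eq_true_eq,
    not_and, not_not]
  constructor
  · intro h s hs1 hsa hak
    simpa [show a - (a - s - 1 + 1) = s by omega] using h (a - s - 1) (by omega) (by omega)
  · exact fun h j hj hs1 => h _ hs1 (by omega) (by omega)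

theorem find?_forward_eq_some :
    ((List.range l).map (fun j => a + (j + 1))).find?
        (fun s => decide (s ≤ n ∧ s ∉ occ)) = some b ↔
      a < b ∧ b ≤ a + l ∧ b ≤ n ∧ b ∉ occ ∧ ∀ s, a < s → s < b → s ∈ occ := by
  simp only [List.find?_map_range_eq_some, decide_eq_true_eq, decide_eq_false_iff_not,
    not_and, not_not]
  constructor
  · rintro ⟨j, hj, rfl, ⟨hbn, hb⟩, hbefore⟩
    refine ⟨by omega, by omega, hbn, hb, fun s hs hsb => ?_⟩
    simpa [show a + (s - a - 1 + 1) = s by omega] using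
      hbefore (s - a - 1) (by omega) (by omega)
  · rintro ⟨hab, hbl, hbn, hb, hocc⟩
    exact ⟨b - a - 1, by omega, by omega, ⟨hbn, hb⟩,
      fun j' hj' _ => hocc _ (by omega) (by omega)⟩

theorem pullTry_eq_some_iff :
    pullTry k l n occ a = some b ↔
      (a ∉ occ ∧ a = b) ∨
      (a ∈ occ ∧
        (((List.range k).map (fun j => a - (j + 1))).find?
            (fun s => decide (1 ≤ s ∧ s ∉ occ)) = some b ∨
          (((List.range k).map (fun j => a - (j + 1))).find?
              (fun s => decide (1 ≤ s ∧ s ∉ occ)) = none ∧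
            ((List.range l).map (fun j => a + (j + 1))).find?
              (fun s => decide (s ≤ n ∧ s ∉ occ)) = some b))) := by
  unfold pullTry
  by_cases ha : a ∈ occ
  · cases ((List.range k).map (fun j => a - (j + 1))).find?
        (fun s => decide (1 ≤ s ∧ s ∉ occ)) <;> simp [ha]
  · simp [ha]

end PullbackSearch

section ParkingAtSpot

variable {occ : Finset ℕ} {k l n a i : ℕ}

theorem pullTry_self (hi : i ∉ occ) : pullTry k l n occ i = some i := by
  simp [pullTry, hi]

theorem pullTry_eq_some_iff_of_spot_lt (hi1 : 1 ≤ i) (hi : i ∉ occ) (hia : i < a) :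
    pullTry k l n occ a = some i ↔ a ≤ i + k ∧ ∀ s, i < s → s ≤ a → s ∈ occ := by
  rw [pullTry_eq_some_iff, find?_backward_eq_some, find?_forward_eq_some]
  constructor
  · rintro (⟨-, rfl⟩ | ⟨ha, ⟨-, -, hak, -, hocc⟩ | ⟨-, hai, -⟩⟩)
    · omega
    · refine ⟨hak, fun s his hsa => ?_⟩
      rcases hsa.lt_or_eq with hsa | rfl
      exacts [hocc s his hsa, ha]
    · omega
  · rintro ⟨hak, hocc⟩
    exact .inr ⟨hocc a hia le_rfl, .inl ⟨hi1, hia, hak, hi, fun s his hsa => hocc s his hsa.le⟩⟩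

theorem pullTry_eq_some_iff_of_lt_spot (hi : i ∉ occ) (hai : a < i) :
    pullTry k l n occ a = some i ↔
      (∀ s, 1 ≤ s → s < a → a ≤ s + k → s ∈ occ) ∧ i ≤ a + l ∧ i ≤ n ∧
        ∀ s, a ≤ s → s < i → s ∈ occ := by
  rw [pullTry_eq_some_iff, find?_backward_eq_some, find?_backward_eq_none,
    find?_forward_eq_some]
  constructor
  · rintro (⟨-, rfl⟩ | ⟨ha, ⟨-, hia, -⟩ | ⟨hback, -, hil, hin, -, hocc⟩⟩)
    · omega
    · omega
    · refine ⟨hback, hil, hin, fun s has hsi => ?_⟩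
      rcases has.lt_or_eq with has | rfl
      exacts [hocc s has hsi, ha]
  · rintro ⟨hback, hil, hin, hocc⟩
    exact .inr ⟨hocc a le_rfl hai, .inr ⟨hback, hai, hil, hin, hi,
      fun s has hsi => hocc s has.le hsi⟩⟩

end ParkingAtSpot

section Runs

variable {occ : Finset ℕ} {k l n a i R L : ℕ}

theorem pullTry_eq_some_iff_le_add_min_of_spot_lt (hi1 : 1 ≤ i) (hi : i ∉ occ)
    (hR : ∀ t, i < t → t ≤ i + R → t ∈ occ) (hR' : i + R + 1 ∉ occ) (hia : i < a) :
    pullTry k l n occ a = some i ↔ a ≤ i + min R k := by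
  rw [pullTry_eq_some_iff_of_spot_lt hi1 hi hia]
  constructor
  · rintro ⟨hak, hocc⟩
    have haR : a ≤ i + R := by
      by_contra! h
      exact hR' (hocc _ (by omega) (by omega))
    omega
  · exact fun ha => ⟨by omega, fun s his hsa => hR s his (by omega)⟩

theorem pullTry_eq_some_iff_sub_le_of_lt_spot (hocc0 : 0 ∉ occ) (hi : i ∉ occ) (hin : i ≤ n)
    (hL : ∀ t, i - L ≤ t → t < i → t ∈ occ) (hL' : i - L - 1 ∉ occ) (hai : a < i) :
    pullTry k l n occ a = some i ↔
      i - (if L = 0 then 0 else if L = i - 1 then min (i - 1) l else min (L - k) l) ≤ a := by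
  have hLi : L < i := by
    by_contra! h
    exact hocc0 (hL 0 (by omega) (by omega))
  have hrun : (∀ s, a ≤ s → s < i → s ∈ occ) ↔ i - L ≤ a :=
    ⟨fun h => by by_contra! h'; exact hL' (h _ (by omega) (by omega)),
      fun h s has hsi => hL s (by omega) hsi⟩
  rw [pullTry_eq_some_iff_of_lt_spot hi hai, hrun]
  split_ifs with hL0 hfull
  · constructor
    · rintro ⟨-, -, -, h⟩
      omega
    · omega
  · constructor
    · rintro ⟨-, hil, -, h⟩
      omega
    · intro h
      exact ⟨fun s hs1 hsa _ => hL s (by omega) (by omega), by omega, hin, by omega⟩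
  -- the free spot `i - L - 1 ≥ 1` must lie beyond the reach of the backward search from `a`
  · constructor
    · rintro ⟨hback, hil, -, h⟩
      have hak : i - L + k ≤ a := by
        by_contra! h'
        exact hL' (hback _ (by omega) (by omega) (by omega))
      omega
    · intro h
      exact ⟨fun s _ hsa has => hL s (by omega) (by omega), by omega, hin, by omega⟩


theorem card_filter_pullTry_eq_some (hocc : occ ⊆ Finset.Icc 1 n) (hi1 : 1 ≤ i)
    (hin : i ≤ n) (hi : i ∉ occ)
    (hR : ∀ t, i < t → t ≤ i + R → t ∈ occ) (hR' : i + R + 1 ∉ occ)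
    (hL : ∀ t, i - L ≤ t → t < i → t ∈ occ) (hL' : i - L - 1 ∉ occ) :
    ((Finset.Icc 1 n).filter (fun a => pullTry k l n occ a = some i)).card =
      min R k + (if L = 0 then 0 else if L = i - 1 then min (i - 1) l else min (L - k) l)
        + 1 := by
  have hocc0 : 0 ∉ occ := fun h => by simpa using hocc h
  have hLi : L < i := by
    by_contra! h
    exact hocc0 (hL 0 (by omega) hi1)
  generalize hF : (if L = 0 then 0 else if L = i - 1 then min (i - 1) l else min (L - k) l) = F
  have hFi : F < i := by
    rw [← hF]
    split_ifs <;> omega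
  suffices (Finset.Icc 1 n).filter (fun a => pullTry k l n occ a = some i) =
      Finset.Icc (i - F) (i + min R k) by
    rw [this, Nat.card_Icc]
    omega
  ext a
  simp only [Finset.mem_filter, Finset.mem_Icc]
  rcases lt_trichotomy a i with hai | rfl | hia
  · rw [pullTry_eq_some_iff_sub_le_of_lt_spot hocc0 hi hin hL hL' hai, hF]
    omega
  · simp only [pullTry_self hi, and_true]
    omega
  · rw [pullTry_eq_some_iff_le_add_min_of_spot_lt hi1 hi hR hR' hia]
    refine ⟨fun h => ⟨by omega, h.2⟩, fun ⟨_, haR⟩ => ⟨?_, haR⟩⟩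
    simpa using hocc (hR a hia (by omega))

end Runs

section Arrangement

variable {n : ℕ} {π : Fin n → ℕ} {c i t : ℕ}

theorem mem_Icc_of_at1_pos (h : 0 < at1 π t) : t ∈ Finset.Icc 1 n := by
  unfold at1 at h
  split at h
  · exact Finset.mem_Icc.2 ‹_›
  · omega

theorem mem_occBefore_iff : t ∈ occBefore π c ↔ 0 < at1 π t ∧ at1 π t < c := by
  rw [occBefore, Finset.mem_filter, and_iff_right_iff_imp]
  exact fun h => mem_Icc_of_at1_pos h.1

theorem occBefore_subset_Icc : occBefore π c ⊆ Finset.Icc 1 n :=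
  Finset.filter_subset _ _

theorem self_notMem_occBefore : i ∉ occBefore π (at1 π i) := by
  simp [mem_occBefore_iff]

theorem mem_occBefore_of_le_rightRun (hit : i < t) (hti : t ≤ i + rightRun π i) :
    t ∈ occBefore π (at1 π i) :=
  mem_occBefore_iff.2 <| Nat.findGreatest_spec (m := 0) (n := n)
    (P := fun x => ∀ t ∈ Finset.Icc (i + 1) (i + x), 0 < at1 π t ∧ at1 π t < at1 π i)
    (Nat.zero_le n) (fun t ht => absurd (Finset.mem_Icc.1 ht) (by omega)) t
    (Finset.mem_Icc.2 ⟨hit, hti⟩)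

theorem rightRun_add_one_notMem_occBefore : i + rightRun π i + 1 ∉ occBefore π (at1 π i) := by
  intro h
  have hn := Finset.mem_Icc.1 (occBefore_subset_Icc h)
  refine Nat.findGreatest_is_greatest (Nat.lt_succ_self (rightRun π i)) (by omega) ?_
  intro t ht
  rw [Finset.mem_Icc] at ht
  rcases ht.2.lt_or_eq with ht' | rfl
  · exact mem_occBefore_iff.1 (mem_occBefore_of_le_rightRun (by omega) (by omega))
  · exact mem_occBefore_iff.1 h

theorem mem_occBefore_of_leftRun_le (hti : i - leftRun π i ≤ t) (hit : t < i) :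
    t ∈ occBefore π (at1 π i) :=
  mem_occBefore_iff.2 <| @Nat.findGreatest_spec 0
    (fun x => ∀ t ∈ Finset.Icc (i - x) (i - 1), 0 < at1 π t ∧ at1 π t < at1 π i)
    (fun _ => Classical.propDecidable _) n (Nat.zero_le n)
    (fun t ht => absurd (Finset.mem_Icc.1 ht) (by omega)) t (Finset.mem_Icc.2 ⟨hti, by omega⟩)

theorem sub_leftRun_sub_one_notMem_occBefore (hin : i ≤ n) :
    i - leftRun π i - 1 ∉ occBefore π (at1 π i) := by
  intro h
  have hn := Finset.mem_Icc.1 (occBefore_subset_Icc h)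
  refine @Nat.findGreatest_is_greatest (leftRun π i + 1) _ (fun _ => Classical.propDecidable _)
    n (Nat.lt_succ_self _) (by omega) ?_
  intro t ht
  rw [Finset.mem_Icc] at ht
  rcases ht.1.lt_or_eq with ht' | rfl
  · exact mem_occBefore_iff.1 (mem_occBefore_of_leftRun_le (by omega) (by omega))
  · exact mem_occBefore_iff.1 h

end Arrangement

theorem stmt13_general (k l n : ℕ) (π : Fin n → ℕ) (i : ℕ) (hi1 : 1 ≤ i) (hin : i ≤ n) :
    ((Finset.Icc 1 n).filter
        (fun a => pullTry k l n (occBefore π (at1 π i)) a = some i)).card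
      = Bval k π i + Fval k l π i + 1 :=
  card_filter_pullTry_eq_some occBefore_subset_Icc hi1 hin self_notMem_occBefore
    (fun _ => mem_occBefore_of_le_rightRun) rightRun_add_one_notMem_occBefore
    (fun _ => mem_occBefore_of_leftRun_le) (sub_leftRun_sub_one_notMem_occBefore hin)

theorem stmt13 (k l m n : ℕ) (hm : m ≤ n) (π : Fin n → ℕ)
    (hπ : π ∈ SmnSet m n) (i : ℕ) (hi1 : 1 ≤ i) (hin : i ≤ n)
    (hpos : 0 < at1 π i) :
    ((Finset.Icc 1 n).filter
        (fun a => pullTry k l n (occBefore π (at1 π i)) a = some i)).card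
      = Bval k π i + Fval k l π i + 1 :=
  stmt13_general k l n π i hi1 hin
end
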